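/- arXiv:1801.04625 — 4 statements merged into one kernel-verified Lean document; each statement's English description precedes it below -/
import Mathlib

section
/- Let A, B be invertible n×n matrices and M = [[A,B],[-A,B]] the associated 2n×2n block matrix. For 1 ≤ i,j ≤ n, the (i, 2j-1) minor of M (determinant of M with row i and column 2j-1 removed, after reordering columns so that odd columns come first) satisfies: minor(M)_{i,2j-1} / ((-1)^{j+1} det M) = minor(A)_{i,j} / (2 det A), where the columns of M are arranged so odd-indexed columns correspond to columns of A-type entries. -/
/-- The index map `Fin (m-1) → Fin m` skipping `p`. -/
def skipIdx {m : ℕ} (p : Fin m) (k : Fin (m - 1)) : Fin m :=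
  if h : (k : ℕ) < (p : ℕ) then ⟨k, by have := k.isLt; omega⟩
  else ⟨(k : ℕ) + 1, by have := k.isLt; have := p.isLt; omega⟩

/-- The (p,q) minor of a square matrix: determinant of the matrix with row p and column q
removed. -/
noncomputable def minorDet {K : Type*} [Field K] {m : ℕ}
    (X : Matrix (Fin m) (Fin m) K) (p q : Fin m) : K :=
  (X.submatrix (skipIdx p) (skipIdx q)).det

lemma skipIdx_eq_succAbove {k : ℕ} (p : Fin (k + 1)) :
    skipIdx p = (Fin.succAbove p : Fin k → Fin (k + 1)) := by
  funext q
  unfold skipIdx Fin.succAbove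
  split_ifs with h1 h2 h2
  · rfl
  · exact absurd (show q.castSucc < p from Fin.lt_def.mpr h1) h2
  · exact absurd (show (q : ℕ) < (p : ℕ) from Fin.lt_def.mp h2) h1
  · rfl

lemma minorDet_eq_adj {K : Type*} [Field K] {m : ℕ} (hm : 0 < m)
    (X : Matrix (Fin m) (Fin m) K) (p q : Fin m) :
    minorDet X p q = (-1 : K) ^ ((p : ℕ) + (q : ℕ)) * X.adjugate q p := by
  obtain ⟨k, rfl⟩ : ∃ k, m = k + 1 := ⟨m - 1, by omega⟩
  rw [Matrix.adjugate_fin_succ_eq_det_submatrix, minorDet, skipIdx_eq_succAbove,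
    skipIdx_eq_succAbove, ← mul_assoc, ← pow_add,
    show (p : ℕ) + q + ((p : ℕ) + q) = 2 * ((p : ℕ) + q) by ring, pow_mul]
  simp

theorem stmt_2 {K : Type*} [Field K] {n : ℕ}
    (A B : Matrix (Fin n) (Fin n) K)
    (hA : IsUnit A.det) (hB : IsUnit B.det)
    (M : Matrix (Fin (2 * n)) (Fin (2 * n)) K)
    -- first block of rows, A-type (odd, i.e. here even 0-indexed) columns
    (hM1 : ∀ r j : Fin n, M ⟨r, by have := r.isLt; omega⟩ ⟨2 * j, by have := j.isLt; omega⟩ = A r j)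
    -- first block of rows, B-type columns
    (hM2 : ∀ r j : Fin n, M ⟨r, by have := r.isLt; omega⟩ ⟨2 * j + 1, by have := j.isLt; omega⟩ = B r j)
    -- second block of rows, A-type columns carry a sign (-1)
    (hM3 : ∀ r j : Fin n, M ⟨n + r, by have := r.isLt; omega⟩ ⟨2 * j, by have := j.isLt; omega⟩ = -A r j)
    -- second block of rows, B-type columns
    (hM4 : ∀ r j : Fin n, M ⟨n + r, by have := r.isLt; omega⟩ ⟨2 * j + 1, by have := j.isLt; omega⟩ = B r j)
    (i j : Fin n) :
    minorDet M ⟨i, by have := i.isLt; omega⟩ ⟨2 * j, by have := j.isLt; omega⟩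
        / ((-1 : K) ^ (j : ℕ) * M.det)
      = minorDet A i j / (2 * A.det) := by
  have hn : 0 < n := i.pos
  by_cases h2 : (2 : K) = 0
  · -- characteristic 2 : both sides are 0
    have hneg : ∀ x : K, -x = x := by
      intro x
      have hx : x + x = 0 := by
        have : x + x = 2 * x := by ring
        rw [this, h2, zero_mul]
      linear_combination -hx
    have hMdet : M.det = 0 := by
      apply Matrix.det_zero_of_row_eq
        (i := (⟨(i : ℕ), by omega⟩ : Fin (2 * n))) (j := ⟨n + i, by omega⟩)
      · simp only [ne_eq, Fin.mk.injEq]; omega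
      · funext c
        by_cases hc : (c : ℕ) % 2 = 0
        · have hcc : c = (⟨2 * ((⟨(c : ℕ) / 2, by omega⟩ : Fin n) : ℕ), by omega⟩ : Fin (2 * n)) :=
            Fin.ext (show (c : ℕ) = 2 * ((c : ℕ) / 2) by omega)
          rw [hcc, hM1 i, hM3 i, hneg]
        · have hcc : c = (⟨2 * ((⟨(c : ℕ) / 2, by omega⟩ : Fin n) : ℕ) + 1, by omega⟩ : Fin (2 * n)) :=
            Fin.ext (show (c : ℕ) = 2 * ((c : ℕ) / 2) + 1 by omega)
          rw [hcc, hM2 i, hM4 i]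
    rw [hMdet, mul_zero, div_zero, h2, zero_mul, div_zero]
  · -- 2 ≠ 0
    let eR : Fin (2 * n) ≃ Fin n ⊕ Fin n :=
      { toFun := fun r => if h : (r : ℕ) < n then Sum.inl ⟨r, h⟩
          else Sum.inr ⟨(r : ℕ) - n, by have := r.isLt; omega⟩
        invFun := Sum.elim (fun a => ⟨a, by have := a.isLt; omega⟩)
          (fun a => ⟨n + a, by have := a.isLt; omega⟩)
        left_inv := by
          intro r
          dsimp only
          by_cases h : (r : ℕ) < n
          · rw [dif_pos h]
            rfl
          · rw [dif_neg h]
            exact Fin.ext (show n + ((r : ℕ) - n) = (r : ℕ) by omega)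
        right_inv := by
          rintro (a | a) <;> dsimp only [Sum.elim_inl, Sum.elim_inr]
          · rw [dif_pos a.isLt]
          · rw [dif_neg (show ¬(n + (a : ℕ) < n) by omega)]
            exact congrArg Sum.inr (Fin.ext (show n + (a : ℕ) - n = (a : ℕ) by omega)) }
    let eC : Fin (2 * n) ≃ Fin n ⊕ Fin n :=
      { toFun := fun c => if h : (c : ℕ) % 2 = 0 then
            Sum.inl ⟨(c : ℕ) / 2, by have := c.isLt; omega⟩
          else Sum.inr ⟨(c : ℕ) / 2, by have := c.isLt; omega⟩
        invFun := Sum.elim (fun a => ⟨2 * a, by have := a.isLt; omega⟩)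
          (fun a => ⟨2 * a + 1, by have := a.isLt; omega⟩)
        left_inv := by
          intro c
          dsimp only
          by_cases h : (c : ℕ) % 2 = 0
          · rw [dif_pos h]
            exact Fin.ext (show 2 * ((c : ℕ) / 2) = (c : ℕ) by omega)
          · rw [dif_neg h]
            exact Fin.ext (show 2 * ((c : ℕ) / 2) + 1 = (c : ℕ) by omega)
        right_inv := by
          rintro (a | a) <;> dsimp only [Sum.elim_inl, Sum.elim_inr]
          · rw [dif_pos (show 2 * (a : ℕ) % 2 = 0 by omega)]
            exact congrArg Sum.inl (Fin.ext (show 2 * (a : ℕ) / 2 = (a : ℕ) by omega))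
          · rw [dif_neg (show ¬((2 * (a : ℕ) + 1) % 2 = 0) by omega)]
            exact congrArg Sum.inr (Fin.ext (show (2 * (a : ℕ) + 1) / 2 = (a : ℕ) by omega)) }
    set N : Matrix (Fin n ⊕ Fin n) (Fin n ⊕ Fin n) K := Matrix.fromBlocks A B (-A) B with hN
    set W : Matrix (Fin n ⊕ Fin n) (Fin n ⊕ Fin n) K :=
      Matrix.fromBlocks ((2 : K)⁻¹ • A⁻¹) (-((2 : K)⁻¹ • A⁻¹))
        ((2 : K)⁻¹ • B⁻¹) ((2 : K)⁻¹ • B⁻¹) with hW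
    have hMN : M = N.submatrix eR eC := by
      ext r c
      rw [Matrix.submatrix_apply]
      have hr0 := (Equiv.symm_apply_apply eR r).symm
      have hc0 := (Equiv.symm_apply_apply eC c).symm
      rcases hra : eR r with a | a <;> rcases hcb : eC c with b | b <;>
        rw [hra] at hr0 <;> rw [hcb] at hc0 <;>
        rw [hr0, hc0]
      · show M ⟨(a : ℕ), by have := a.isLt; omega⟩ ⟨2 * (b : ℕ), by have := b.isLt; omega⟩
          = Matrix.fromBlocks A B (-A) B (Sum.inl a) (Sum.inl b)
        rw [hM1, Matrix.fromBlocks_apply₁₁]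
      · show M ⟨(a : ℕ), by have := a.isLt; omega⟩ ⟨2 * (b : ℕ) + 1, by have := b.isLt; omega⟩
          = Matrix.fromBlocks A B (-A) B (Sum.inl a) (Sum.inr b)
        rw [hM2, Matrix.fromBlocks_apply₁₂]
      · show M ⟨n + (a : ℕ), by have := a.isLt; omega⟩ ⟨2 * (b : ℕ), by have := b.isLt; omega⟩
          = Matrix.fromBlocks A B (-A) B (Sum.inr a) (Sum.inl b)
        rw [hM3, Matrix.fromBlocks_apply₂₁, Matrix.neg_apply]
      · show M ⟨n + (a : ℕ), by have := a.isLt; omega⟩ ⟨2 * (b : ℕ) + 1, by have := b.isLt; omega⟩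
          = Matrix.fromBlocks A B (-A) B (Sum.inr a) (Sum.inr b)
        rw [hM4, Matrix.fromBlocks_apply₂₂]
    have hAA : A * A⁻¹ = 1 := Matrix.mul_nonsing_inv A hA
    have hBB : B * B⁻¹ = 1 := Matrix.mul_nonsing_inv B hB
    have hhalf : (2 : K)⁻¹ + (2 : K)⁻¹ = 1 := by field_simp; norm_num
    have hb1 : A * ((2 : K)⁻¹ • A⁻¹) + B * ((2 : K)⁻¹ • B⁻¹) = 1 := by
      rw [Matrix.mul_smul, Matrix.mul_smul, hAA, hBB, ← add_smul, hhalf, one_smul]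
    have hb2 : A * (-((2 : K)⁻¹ • A⁻¹)) + B * ((2 : K)⁻¹ • B⁻¹) = 0 := by
      rw [Matrix.mul_neg, Matrix.mul_smul, Matrix.mul_smul, hAA, hBB, neg_add_cancel]
    have hb3 : (-A) * ((2 : K)⁻¹ • A⁻¹) + B * ((2 : K)⁻¹ • B⁻¹) = 0 := by
      rw [Matrix.neg_mul, Matrix.mul_smul, Matrix.mul_smul, hAA, hBB, neg_add_cancel]
    have hb4 : (-A) * (-((2 : K)⁻¹ • A⁻¹)) + B * ((2 : K)⁻¹ • B⁻¹) = 1 := by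
      rw [Matrix.neg_mul, Matrix.mul_neg, neg_neg, Matrix.mul_smul, Matrix.mul_smul, hAA, hBB,
        ← add_smul, hhalf, one_smul]
    have hNW : N * W = 1 := by
      rw [hN, hW, Matrix.fromBlocks_multiply, hb1, hb2, hb3, hb4, Matrix.fromBlocks_one]
    have hMV : M * (W.submatrix eC eR) = 1 := by
      rw [hMN, Matrix.submatrix_mul_equiv, hNW, Matrix.submatrix_one_equiv]
    have hMdet : IsUnit M.det := Matrix.isUnit_det_of_right_inverse hMV
    have hMinv : M⁻¹ = W.submatrix eC eR := Matrix.inv_eq_right_inv hMV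
    have hentry : M⁻¹ (⟨2 * (j : ℕ), by have := j.isLt; omega⟩ : Fin (2 * n))
        (⟨(i : ℕ), by have := i.isLt; omega⟩ : Fin (2 * n)) = (2 : K)⁻¹ * A⁻¹ j i := by
      rw [hMinv, Matrix.submatrix_apply]
      show W (eC (eC.symm (Sum.inl j))) (eR (eR.symm (Sum.inl i))) = (2 : K)⁻¹ * A⁻¹ j i
      rw [Equiv.apply_symm_apply, Equiv.apply_symm_apply, hW, Matrix.fromBlocks_apply₁₁,
        Matrix.smul_apply, smul_eq_mul]
    have hadjM : M.adjugate = M.det • M⁻¹ := by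
      calc M.adjugate = (M⁻¹ * M) * M.adjugate := by
            rw [Matrix.nonsing_inv_mul M hMdet, one_mul]
        _ = M⁻¹ * (M * M.adjugate) := by rw [Matrix.mul_assoc]
        _ = M⁻¹ * (M.det • 1) := by rw [Matrix.mul_adjugate]
        _ = M.det • M⁻¹ := by rw [Matrix.mul_smul, Matrix.mul_one]
    have hadjA : A.adjugate = A.det • A⁻¹ := by
      calc A.adjugate = (A⁻¹ * A) * A.adjugate := by
            rw [Matrix.nonsing_inv_mul A hA, one_mul]
        _ = A⁻¹ * (A * A.adjugate) := by rw [Matrix.mul_assoc]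
        _ = A⁻¹ * (A.det • 1) := by rw [Matrix.mul_adjugate]
        _ = A.det • A⁻¹ := by rw [Matrix.mul_smul, Matrix.mul_one]
    rw [minorDet_eq_adj (by omega), minorDet_eq_adj hn, hadjM, hadjA]
    simp only [Matrix.smul_apply, smul_eq_mul]
    rw [hentry]
    have hdM : M.det ≠ 0 := hMdet.ne_zero
    have hdA : A.det ≠ 0 := hA.ne_zero
    rw [div_eq_div_iff (mul_ne_zero (pow_ne_zero _ (by norm_num)) hdM) (mul_ne_zero h2 hdA)]
    simp only [pow_add, pow_mul, pow_mul', neg_one_sq, one_pow]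
    field_simp
    ring_nf
    simp only [pow_mul', neg_one_sq, one_pow]
    ring
end

section
/- Fix real numbers a, b, and define θ(x) = x(x + a + b + 1) and the involution I(p)(x) = p(-(x + a + b + 1)) on real polynomials. Then a polynomial p ∈ ℝ[x] satisfies I(p) = p if and only if p is a polynomial in θ, i.e., there exists q ∈ ℝ[x] with p(x) = q(θ(x)) for all x. -/
open Polynomial

lemma coeff_comp_negX (p : ℝ[X]) (n : ℕ) :
    (p.comp (-X)).coeff n = (-1) ^ n * p.coeff n := by
  induction p using Polynomial.induction_on' with
  | add f g hf hg => simp [add_comp, hf, hg, mul_add]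
  | monomial m c =>
      rw [monomial_comp, neg_pow,
        show ((-1 : ℝ[X]) ^ m) = C ((-1 : ℝ) ^ m) by rw [map_pow, map_neg, map_one],
        show (C c * (C ((-1:ℝ) ^ m) * X ^ m)) = C (c * (-1) ^ m) * X ^ m by
          rw [map_mul]; ring,
        coeff_C_mul, coeff_X_pow, coeff_monomial]
      by_cases h : m = n
      · subst h; simp; ring
      · simp only [if_neg h]
        rw [if_neg (fun h' => h h'.symm)]
        simp

lemma even_poly_aux (n : ℕ) : ∀ p : ℝ[X], p.natDegree ≤ n → p.comp (-X) = p →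
    ∃ q : ℝ[X], p = q.comp (X ^ 2) := by
  induction n using Nat.strong_induction_on with
  | _ n ih =>
  intro p hdeg h
  set d : ℝ[X] := p - C (p.coeff 0) with hd
  by_cases hd0 : d = 0
  · exact ⟨C (p.coeff 0), by rw [C_comp]; linear_combination hd0⟩
  have h1 : p.coeff 1 = 0 := by
    have := coeff_comp_negX p 1
    rw [h] at this
    simp at this
    linarith
  have hdvd : X ^ 2 ∣ d := by
    rw [X_pow_dvd_iff]
    intro i hi
    interval_cases i <;> simp [hd, h1]
  obtain ⟨e, he⟩ := hdvd
  have heven : e.comp (-X) = e := by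
    have hde : d.comp (-X) = d := by
      simp [hd, sub_comp, h]
    rw [he] at hde
    have : (X:ℝ[X]) ^ 2 * e.comp (-X) = X ^ 2 * e := by
      simpa [mul_comp] using hde
    exact mul_left_cancel₀ (by simp [pow_ne_zero]) this
  have he0 : e ≠ 0 := fun h0 => hd0 (by simp [he, h0])
  have hdlt : e.natDegree < n := by
    have h1' : d.natDegree = 2 + e.natDegree := by
      rw [he, natDegree_mul (by simp [pow_ne_zero]) he0, natDegree_pow, natDegree_X]
    have h2' : d.natDegree ≤ p.natDegree := by
      apply (natDegree_sub_le _ _).trans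
      simp [natDegree_C]
    omega
  obtain ⟨q, hq⟩ := ih e.natDegree hdlt e le_rfl heven
  refine ⟨C (p.coeff 0) + X * q, ?_⟩
  have : p = C (p.coeff 0) + X ^ 2 * e := by rw [← he]; ring
  rw [this, hq]
  simp [add_comp, mul_comp]

lemma even_poly (p : ℝ[X]) (h : p.comp (-X) = p) :
    ∃ q : ℝ[X], p = q.comp (X ^ 2) :=
  even_poly_aux p.natDegree p le_rfl h

theorem stmt_5 (a b : ℝ) (p : ℝ[X]) :
    p.comp (-(X + C (a + b + 1))) = p ↔
      ∃ q : ℝ[X], p = q.comp (X * (X + C (a + b + 1))) := by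
  set c : ℝ := a + b + 1 with hc
  have hC1 : (C c : ℝ[X]) = C (c / 2) + C (c / 2) := by rw [← C_add]; ring_nf
  have hC2 : (C (c ^ 2 / 4) : ℝ[X]) = C (c / 2) * C (c / 2) := by rw [← C_mul]; ring_nf
  constructor
  · intro h
    set u : ℝ[X] := p.comp (X - C (c / 2)) with hu
    have hueven : u.comp (-X) = u := by
      have h0 : u.comp (-X) = p.comp ((X - C (c / 2)).comp (-X)) := by
        rw [hu, comp_assoc]
      rw [h0]
      have h2 : (p.comp (-(X + C c))).comp (X - C (c / 2)) = p.comp (X - C (c / 2)) := by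
        rw [h]
      rw [comp_assoc] at h2
      have e1 : (X - C (c/2)).comp (-X) = (-(X + C c)).comp (X - C (c/2)) := by
        simp only [sub_comp, neg_comp, add_comp, X_comp, C_comp]
        rw [hC1]; ring
      rw [e1, h2]
    obtain ⟨q, hq⟩ := even_poly u hueven
    refine ⟨q.comp (X + C (c^2 / 4)), ?_⟩
    have hpu : p = u.comp (X + C (c / 2)) := by
      rw [hu, comp_assoc]
      simp [sub_comp, add_comp]
    rw [hpu, hq, comp_assoc, comp_assoc]
    congr 1
    simp only [add_comp, X_comp, C_comp, pow_comp, mul_comp]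
    rw [hC1, hC2]; ring
  · rintro ⟨q, rfl⟩
    rw [comp_assoc]
    congr 1
    simp only [mul_comp, add_comp, neg_comp, X_comp, C_comp]
    ring
end

section
/- Let s be a pole of Ψ_j under the hypotheses: Ψ_1,…,Ψ_m rational with at most simple poles such that for every polynomial p, L_p(x) = ∑_{i=1}^m (-1)^i p(θ(x-i)) Ψ_i(x) is a polynomial, where θ(x) = x(x+a+b+1). Then there exists a unique index l ≠ j, 1 ≤ l ≤ m, such that s = (-(a+b+1) + j + l)/2, the point s is also a pole of Ψ_l, and the residues satisfy (-1)^j Res_{x=s} Ψ_j + (-1)^l Res_{x=s} Ψ_l = 0. -/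
open Polynomial Filter Topology

-- derivative at a simple root is nonzero, equal to cofactor value
lemma sq_deriv {d : ℝ[X]} (hd : Squarefree d) {s : ℝ} (hs : d.eval s = 0) :
    d.derivative.eval s = (d /ₘ (X - C s)).eval s ∧ (d /ₘ (X - C s)).eval s ≠ 0 := by
  have hfac : (X - C s) * (d /ₘ (X - C s)) = d :=
    (mul_divByMonic_eq_iff_isRoot).mpr hs
  set g := d /ₘ (X - C s) with hg
  have hder : d.derivative.eval s = g.eval s := by
    conv_lhs => rw [← hfac]
    simp [derivative_mul]
  refine ⟨hder, fun h0 => ?_⟩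
  have hdvd : (X - C s) ∣ g := dvd_iff_isRoot.mpr h0
  obtain ⟨k, hk⟩ := hdvd
  have : (X - C s) * (X - C s) ∣ d := ⟨k, by rw [← hfac, hk]; ring⟩
  exact (Polynomial.not_isUnit_X_sub_C s) (hd _ this)

lemma resid_sum (a b : ℝ) {m : ℕ} (num den : Fin m → ℝ[X]) (hden : ∀ i, Squarefree (den i))
    (Ψ : Fin m → ℝ → ℝ)
    (hΨ : ∀ i x, Ψ i x = (num i).eval x / (den i).eval x)
    (hL : ∀ p : ℝ[X], ∃ L : ℝ[X], ∀ x : ℝ, (∀ i, (den i).eval x ≠ 0) →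
      (∑ i : Fin m, (-1 : ℝ) ^ ((i : ℕ) + 1) *
          p.eval ((x - ((i : ℕ) + 1)) * ((x - ((i : ℕ) + 1)) + a + b + 1)) * Ψ i x)
        = L.eval x)
    (s : ℝ) (p : ℝ[X]) :
    ∑ i : Fin m, (-1 : ℝ) ^ ((i : ℕ) + 1)
      * p.eval ((s - ((i : ℕ) + 1)) * ((s - ((i : ℕ) + 1)) + a + b + 1))
      * (if (den i).eval s = 0 then (num i).eval s / (den i).derivative.eval s else 0) = 0 := by
  obtain ⟨L, hLp⟩ := hL p
  have hne : ∀ i, den i ≠ 0 := fun i => (hden i).ne_zero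
  -- eventually all denominators are nonzero near s (punctured)
  have hev : ∀ᶠ x in 𝓝[≠] s, ∀ i, (den i).eval x ≠ 0 := by
    rw [eventually_all]
    intro i
    have hfin : ({x : ℝ | (den i).IsRoot x} \ {s}).Finite :=
      (Polynomial.finite_setOf_isRoot (hne i)).diff
    have h1 : ∀ᶠ x in 𝓝 s, x ∉ ({x : ℝ | (den i).IsRoot x} \ {s}) := by
      have hcl : IsClosed ({x : ℝ | (den i).IsRoot x} \ {s}) := hfin.isClosed
      have hsmem : s ∈ ({x : ℝ | (den i).IsRoot x} \ {s})ᶜ := by simp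
      exact hcl.isOpen_compl.mem_nhds hsmem
    filter_upwards [nhdsWithin_le_nhds h1, self_mem_nhdsWithin] with x hx hxs
    intro h0
    exact hx ⟨h0, hxs⟩
  -- limits of each term times (x - s)
  have hterm : ∀ i : Fin m,
      Tendsto (fun x : ℝ => (-1 : ℝ) ^ ((i : ℕ) + 1)
          * p.eval ((x - ((i : ℕ) + 1)) * ((x - ((i : ℕ) + 1)) + a + b + 1))
          * Ψ i x * (x - s)) (𝓝[≠] s)
        (𝓝 ((-1 : ℝ) ^ ((i : ℕ) + 1)
          * p.eval ((s - ((i : ℕ) + 1)) * ((s - ((i : ℕ) + 1)) + a + b + 1))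
          * (if (den i).eval s = 0 then (num i).eval s / (den i).derivative.eval s else 0))) := by
    intro i
    have hA : Continuous fun x : ℝ => (-1 : ℝ) ^ ((i : ℕ) + 1)
        * p.eval ((x - ((i : ℕ) + 1)) * ((x - ((i : ℕ) + 1)) + a + b + 1)) := by
      apply continuous_const.mul
      exact p.continuous.comp (by continuity)
    by_cases hd : (den i).eval s = 0
    · -- pole case
      have hfac : (X - C s) * ((den i) /ₘ (X - C s)) = den i :=
        (mul_divByMonic_eq_iff_isRoot).mpr hd
      set g := (den i) /ₘ (X - C s) with hgdef
      obtain ⟨hder, hgs⟩ := sq_deriv (hden i) hd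
      have heq : ∀ᶠ x in 𝓝[≠] s,
          (-1 : ℝ) ^ ((i : ℕ) + 1)
            * p.eval ((x - ((i : ℕ) + 1)) * ((x - ((i : ℕ) + 1)) + a + b + 1))
            * ((num i).eval x / g.eval x)
          = (-1 : ℝ) ^ ((i : ℕ) + 1)
            * p.eval ((x - ((i : ℕ) + 1)) * ((x - ((i : ℕ) + 1)) + a + b + 1))
            * Ψ i x * (x - s) := by
        filter_upwards [hev, self_mem_nhdsWithin] with x hx hxs
        have hx' := hx i
        have hgx : g.eval x ≠ 0 := by
          intro h0; apply hx'; rw [← hfac]; simp [h0]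
        have hxms : x - s ≠ 0 := sub_ne_zero.mpr hxs
        rw [hΨ, ← hfac]
        simp only [eval_mul, eval_sub, eval_X, eval_C]
        field_simp
      have hlim : Tendsto (fun x : ℝ => (-1 : ℝ) ^ ((i : ℕ) + 1)
          * p.eval ((x - ((i : ℕ) + 1)) * ((x - ((i : ℕ) + 1)) + a + b + 1))
          * ((num i).eval x / g.eval x)) (𝓝 s)
          (𝓝 ((-1 : ℝ) ^ ((i : ℕ) + 1)
            * p.eval ((s - ((i : ℕ) + 1)) * ((s - ((i : ℕ) + 1)) + a + b + 1))
            * ((num i).eval s / g.eval s))) := by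
        exact (hA.continuousAt.mul
          (((num i).continuous.continuousAt).div (g.continuous.continuousAt) hgs)).tendsto
      have := (hlim.mono_left nhdsWithin_le_nhds).congr' heq
      simpa [hd, hder] using this
    · -- no pole: limit is 0
      have hlim : Tendsto (fun x : ℝ => (-1 : ℝ) ^ ((i : ℕ) + 1)
          * p.eval ((x - ((i : ℕ) + 1)) * ((x - ((i : ℕ) + 1)) + a + b + 1))
          * Ψ i x * (x - s)) (𝓝 s)
          (𝓝 ((-1 : ℝ) ^ ((i : ℕ) + 1)
            * p.eval ((s - ((i : ℕ) + 1)) * ((s - ((i : ℕ) + 1)) + a + b + 1))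
            * Ψ i s * (s - s))) := by
        have hΨc : ContinuousAt (Ψ i) s := by
          have : ContinuousAt (fun x => (num i).eval x / (den i).eval x) s :=
            ((num i).continuous.continuousAt).div ((den i).continuous.continuousAt) hd
          exact this.congr (by filter_upwards with x using (hΨ i x).symm)
        exact ((hA.continuousAt.mul hΨc).mul ((continuous_id.sub continuous_const).continuousAt)).tendsto
      have := hlim.mono_left (nhdsWithin_le_nhds : 𝓝[≠] s ≤ 𝓝 s)
      simpa [hd] using this
  -- limit of the sum is L(s) * 0 = 0
  have hsum1 : Tendsto (fun x : ℝ => ∑ i : Fin m, (-1 : ℝ) ^ ((i : ℕ) + 1)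
      * p.eval ((x - ((i : ℕ) + 1)) * ((x - ((i : ℕ) + 1)) + a + b + 1)) * Ψ i x * (x - s))
      (𝓝[≠] s)
      (𝓝 (∑ i : Fin m, (-1 : ℝ) ^ ((i : ℕ) + 1)
        * p.eval ((s - ((i : ℕ) + 1)) * ((s - ((i : ℕ) + 1)) + a + b + 1))
        * (if (den i).eval s = 0 then (num i).eval s / (den i).derivative.eval s else 0))) :=
    tendsto_finset_sum _ (fun i _ => hterm i)
  have hsum2 : Tendsto (fun x : ℝ => ∑ i : Fin m, (-1 : ℝ) ^ ((i : ℕ) + 1)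
      * p.eval ((x - ((i : ℕ) + 1)) * ((x - ((i : ℕ) + 1)) + a + b + 1)) * Ψ i x * (x - s))
      (𝓝[≠] s) (𝓝 0) := by
    have hL0 : Tendsto (fun x : ℝ => L.eval x * (x - s)) (𝓝[≠] s) (𝓝 (L.eval s * (s - s))) :=
      ((L.continuous.mul (continuous_id.sub continuous_const)).tendsto s).mono_left
        nhdsWithin_le_nhds
    have heq : ∀ᶠ x in 𝓝[≠] s,
        L.eval x * (x - s) = ∑ i : Fin m, (-1 : ℝ) ^ ((i : ℕ) + 1)
          * p.eval ((x - ((i : ℕ) + 1)) * ((x - ((i : ℕ) + 1)) + a + b + 1)) * Ψ i x * (x - s) := by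
      filter_upwards [hev] with x hx
      rw [← hLp x hx, Finset.sum_mul]
    simpa using hL0.congr' heq
  exact (tendsto_nhds_unique hsum1 hsum2)
theorem stmt_14 (a b : ℝ) (m : ℕ) (hm : 0 < m)
    (num den : Fin m → ℝ[X])
    -- each Ψ_i = num i / den i has at most simple poles (squarefree denominator)
    (hden : ∀ i, Squarefree (den i))
    (Ψ : Fin m → ℝ → ℝ)
    (hΨ : ∀ i x, Ψ i x = (num i).eval x / (den i).eval x)
    -- for every polynomial p, L_p(x) = ∑_i (-1)^i p(θ(x-i)) Ψ_i(x) is a polynomial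
    (hL : ∀ p : ℝ[X], ∃ L : ℝ[X], ∀ x : ℝ, (∀ i, (den i).eval x ≠ 0) →
      (∑ i : Fin m, (-1 : ℝ) ^ ((i : ℕ) + 1) *
          p.eval ((x - ((i : ℕ) + 1)) * ((x - ((i : ℕ) + 1)) + a + b + 1)) * Ψ i x)
        = L.eval x)
    (j : Fin m) (s : ℝ)
    -- s is a pole of Ψ_j
    (hpole : (den j).eval s = 0 ∧ (num j).eval s ≠ 0) :
    -- there is a unique l ≠ j with s = (-(a+b+1)+j+l)/2, s a pole of Ψ_l, and the
    -- residues (num/den' at the simple pole) cancelling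
    ∃! l : Fin m, l ≠ j ∧
      s = (-(a + b + 1) + ((j : ℕ) + 1) + ((l : ℕ) + 1)) / 2 ∧
      ((den l).eval s = 0 ∧ (num l).eval s ≠ 0) ∧
      (-1 : ℝ) ^ ((j : ℕ) + 1) * ((num j).eval s / (den j).derivative.eval s)
        + (-1 : ℝ) ^ ((l : ℕ) + 1) * ((num l).eval s / (den l).derivative.eval s) = 0 := by
  classical
  set t : Fin m → ℝ := fun i => (s - ((i : ℕ) + 1)) * ((s - ((i : ℕ) + 1)) + a + b + 1) with ht
  set c : Fin m → ℝ := fun i =>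
    if (den i).eval s = 0 then (num i).eval s / (den i).derivative.eval s else 0 with hc
  have hkey : ∀ p : ℝ[X], ∑ i : Fin m, (-1 : ℝ) ^ ((i : ℕ) + 1) * p.eval (t i) * c i = 0 :=
    fun p => resid_sum a b num den hden Ψ hΨ hL s p
  -- c j ≠ 0
  have hderj := sq_deriv (hden j) hpole.1
  have hcj : c j ≠ 0 := by
    simp only [hc, if_pos hpole.1]
    rw [hderj.1]
    exact div_ne_zero hpole.2 hderj.2
  -- choose the separating polynomial
  set A : Finset (Fin m) := Finset.univ.filter (fun i => t i = t j) with hA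
  set B : Finset (Fin m) := Finset.univ.filter (fun i => t i ≠ t j) with hB
  set p : ℝ[X] := ∏ k ∈ B, (X - C (t k)) with hp
  have hpeval : ∀ y : ℝ, p.eval y = ∏ k ∈ B, (y - t k) := by
    intro y; simp [hp, eval_prod]
  have hPj : p.eval (t j) ≠ 0 := by
    rw [hpeval]
    refine Finset.prod_ne_zero_iff.mpr fun k hk => ?_
    exact sub_ne_zero.mpr (Ne.symm (Finset.mem_filter.mp hk).2)
  have hsplit : ∑ i : Fin m, (-1 : ℝ) ^ ((i : ℕ) + 1) * p.eval (t i) * c i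
      = ∑ i ∈ A, (-1 : ℝ) ^ ((i : ℕ) + 1) * p.eval (t j) * c i := by
    rw [← Finset.sum_filter_add_sum_filter_not Finset.univ (fun i => t i = t j)]
    have h2 : ∑ i ∈ Finset.univ.filter (fun i => ¬ t i = t j),
        (-1 : ℝ) ^ ((i : ℕ) + 1) * p.eval (t i) * c i = 0 := by
      refine Finset.sum_eq_zero fun i hi => ?_
      have : p.eval (t i) = 0 := by
        rw [hpeval]
        exact Finset.prod_eq_zero (by simpa [hB] using (Finset.mem_filter.mp hi).2) (by ring)
      simp [this]
    rw [h2, add_zero]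
    exact Finset.sum_congr rfl fun i hi => by
      rw [(Finset.mem_filter.mp hi).2]
  have hAsum : ∑ i ∈ A, (-1 : ℝ) ^ ((i : ℕ) + 1) * c i = 0 := by
    have h0 := hkey p
    rw [hsplit] at h0
    have : p.eval (t j) * ∑ i ∈ A, (-1 : ℝ) ^ ((i : ℕ) + 1) * c i = 0 := by
      rw [Finset.mul_sum]; rw [← h0]; exact Finset.sum_congr rfl fun i _ => by ring
    exact (mul_eq_zero.mp this).resolve_left hPj
  have hjA : j ∈ A := by simp [hA]
  -- characterization of members of A other than j
  have hchar : ∀ i : Fin m, t i = t j → i ≠ j →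
      2 * s - (((i : ℕ) : ℝ) + 1) - (((j : ℕ) : ℝ) + 1) + (a + b + 1) = 0 := by
    intro i hti hij
    have hfac : ((((j : ℕ) : ℝ)) - ((i : ℕ) : ℝ)) *
        (2 * s - (((i : ℕ) : ℝ) + 1) - (((j : ℕ) : ℝ) + 1) + (a + b + 1)) = 0 := by
      have := hti
      simp only [ht] at this
      linear_combination this
    have hne : ((((j : ℕ) : ℝ)) - ((i : ℕ) : ℝ)) ≠ 0 := by
      intro h
      apply hij
      have : ((j : ℕ) : ℝ) = ((i : ℕ) : ℝ) := by linarith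
      exact (Fin.ext (Nat.cast_injective this)).symm
    exact (mul_eq_zero.mp hfac).resolve_left hne
  -- existence of l ≠ j in A
  have hex : ∃ l ∈ A, l ≠ j := by
    by_contra h
    push_neg at h
    have hAeq : A = {j} := by
      apply Finset.ext
      intro i
      simp only [Finset.mem_singleton]
      constructor
      · intro hi; exact h i hi
      · intro hi; rw [hi]; exact hjA
    rw [hAeq, Finset.sum_singleton] at hAsum
    exact hcj (by
      have := hAsum
      have hpow : ((-1 : ℝ)) ^ ((j : ℕ) + 1) ≠ 0 := by positivity
      exact (mul_eq_zero.mp this).resolve_left hpow)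
  obtain ⟨l, hlA, hlj⟩ := hex
  have hlt : t l = t j := (Finset.mem_filter.mp hlA).2
  have hls := hchar l hlt hlj
  -- A = {j, l}
  have hApair : A = {j, l} := by
    apply Finset.ext
    intro i
    simp only [Finset.mem_insert, Finset.mem_singleton, hA, Finset.mem_filter, Finset.mem_univ,
      true_and]
    constructor
    · intro hti
      by_cases hij : i = j
      · exact Or.inl hij
      · right
        have his := hchar i hti hij
        have : ((i : ℕ) : ℝ) = ((l : ℕ) : ℝ) := by linarith
        exact Fin.ext (Nat.cast_injective this)
    · rintro (rfl | rfl)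
      · rfl
      · exact hlt
  have hjl : j ≠ l := fun h => hlj h.symm
  rw [hApair, Finset.sum_pair hjl] at hAsum
  -- c l ≠ 0
  have hcl : c l ≠ 0 := by
    intro h0
    rw [h0, mul_zero, add_zero] at hAsum
    have hpow : ((-1 : ℝ)) ^ ((j : ℕ) + 1) ≠ 0 := by positivity
    exact hcj ((mul_eq_zero.mp hAsum).resolve_left hpow)
  have hdenl : (den l).eval s = 0 := by
    by_contra h
    exact hcl (by simp [hc, h])
  have hnum_l : (num l).eval s ≠ 0 := by
    intro h0
    exact hcl (by simp [hc, hdenl, h0])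
  have hseq : s = (-(a + b + 1) + (((j : ℕ) : ℝ) + 1) + (((l : ℕ) : ℝ) + 1)) / 2 := by
    linarith
  refine ⟨l, ⟨hlj, hseq, ⟨hdenl, hnum_l⟩, ?_⟩, ?_⟩
  · have : c j = (num j).eval s / (den j).derivative.eval s := by simp [hc, hpole.1]
    have hcl' : c l = (num l).eval s / (den l).derivative.eval s := by simp [hc, hdenl]
    rw [← this, ← hcl']
    exact hAsum
  · rintro l' ⟨hl'j, hseq', _, _⟩
    have : ((l' : ℕ) : ℝ) = ((l : ℕ) : ℝ) := by linarith [hseq, hseq']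
    exact Fin.ext (Nat.cast_injective this)
end

section
/- Let R be a polynomial solution of σ(x-(m-1)/2) R(x) + σ(x+1-(m-1)/2) R(x+1) = H(x), where σ(x) = -(2x+2a-1), a ∈ ℝ, m a positive integer, and H a polynomial satisfying I^{2a-m-1}(H(x)) = -H(x-1) for all x, where (I^c p)(x) = p(-(x+c+1)). Then R is invariant under I^{2a-m-1}, i.e., R(-(x+2a-m)) = R(x) for all x. -/
open Polynomial

theorem stmt_18 (a : ℝ) (m : ℕ) (hm : 0 < m) (R H : ℝ[X])
    (hH : ∀ x : ℝ, H.eval (-(x + 2 * a - m)) = -H.eval (x - 1))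
    (heq : ∀ x : ℝ,
      (-(2 * (x - ((m : ℝ) - 1) / 2) + 2 * a - 1)) * R.eval x
        + (-(2 * (x + 1 - ((m : ℝ) - 1) / 2) + 2 * a - 1)) * R.eval (x + 1)
      = H.eval x) :
    ∀ x : ℝ, R.eval (-(x + 2 * a - m)) = R.eval x := by
  set c : ℝ := 2 * a - (m : ℝ) with hc
  set D : ℝ[X] := R.comp (-(X + C c)) - R with hD
  set Q : ℝ[X] := (2 * X + C c) * D with hQdef
  have Qeval : ∀ x : ℝ, Q.eval x
      = (2 * x + c) * (R.eval (-(x + c)) - R.eval x) := by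
    intro x
    simp [hQdef, hD, eval_comp]
  -- key functional equation
  have key : ∀ x : ℝ, Q.eval x + Q.eval (x + 1) = 0 := by
    intro x
    rw [Qeval x, Qeval (x + 1)]
    have h1 := heq (-(x + c + 1))
    rw [show -(x + c + 1) + 1 = -(x + c) by ring] at h1
    have h2 := heq x
    have h3 := hH (x + 1)
    rw [show -(x + 1 + 2 * a - (m : ℝ)) = -(x + c + 1) by rw [hc]; ring,
        show (x : ℝ) + 1 - 1 = x by ring] at h3
    rw [show -(x + 1 + c) = -(x + c + 1) by ring]
    have hcc : c = 2 * a - (m : ℝ) := hc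
    linear_combination h1 + h2 + h3
  -- periodicity
  have hper : ∀ x : ℝ, Q.eval (x + 2) = Q.eval x := by
    intro x
    have k1 := key x
    have k2 := key (x + 1)
    rw [show (x : ℝ) + 1 + 1 = x + 2 by ring] at k2
    linarith
  -- Q is constant: Q - C (Q.eval 0) has infinitely many roots
  have hconst : Q = C (Q.eval 0) := by
    have hroots : ∀ n : ℕ, (Q - C (Q.eval 0)).eval ((2 : ℝ) * n) = 0 := by
      intro n
      induction n with
      | zero => simp
      | succ k ih =>
        have : ((2 : ℝ) * (k + 1 : ℕ)) = (2 * k : ℝ) + 2 := by push_cast; ring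
        rw [this]
        simp only [eval_sub, eval_C] at ih ⊢
        rw [hper]
        exact ih
    have hinf : {x : ℝ | (Q - C (Q.eval 0)).IsRoot x}.Infinite := by
      apply Set.infinite_of_injective_forall_mem
        (f := fun n : ℕ => ((2 : ℝ) * n))
      · intro n1 n2 h
        have : (n1 : ℝ) = n2 := by
          field_simp at h
          exact_mod_cast h
        exact_mod_cast this
      · intro n
        exact hroots n
    have := Polynomial.eq_zero_of_infinite_isRoot _ hinf
    exact sub_eq_zero.mp this
  -- Q = 0
  have hQ0 : Q = 0 := by
    have h1 : Q.eval 0 + Q.eval 1 = 0 := by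
      have := key 0; simpa using this
    have h2 : Q.eval 1 = Q.eval 0 := by
      conv_lhs => rw [hconst]
      simp
    have h0 : Q.eval 0 = 0 := by linarith
    rw [hconst, h0, map_zero]
  -- D = 0
  have hD0 : D = 0 := by
    rcases mul_eq_zero.mp (hQdef ▸ hQ0 : (2 * X + C c) * D = 0) with h | h
    · exfalso
      have : ((2 : ℝ[X]) * X + C c).coeff 1 = 2 := by
        simp [coeff_C]
      rw [h] at this
      simp at this
    · exact h
  intro x
  have := congrArg (Polynomial.eval x) hD0
  simp [hD, eval_comp, sub_eq_zero] at this
  rw [show -(x + 2 * a - (m : ℝ)) = -c + -x by rw [hc]; ring]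
  exact this
end
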